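/- arXiv:2203.09620 — 2 statements merged into one kernel-verified Lean document; each statement's English description precedes it below -/
import Mathlib

section
/- (Proposition 3.1) Let N ≥ 1 and q ≥ 2 be integers and y ≥ 1 a real number. Let a, m, c ∈ ℤ^N and let b ∈ ℤ^N have all coordinates in {0, …, q−1}, and suppose a ⋆ m ≡ b + c (mod q) componentwise. Assume every nonzero vector of the lattice L_a has Euclidean norm strictly greater than q^{1/y}. Set V = (m, c) ∈ ℤ^{2N}, let E ∈ ℤ^{2N} satisfy ‖V − E‖ < (1/2)·q^{1/y}, and set b_target = E + (0_N, b) ∈ ℤ^{2N}. Then u := (m, b + c) ∈ L_a, and every w ∈ L_a satisfying ‖w − b_target‖ ≤ ‖v − b_target‖ for all v ∈ L_a (i.e. every closest vector of L_a to b_target) equals u; in particular the first N coordinates of any such w are exactly m. -/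
/-- The circulant matrix `C(a)`: entry `(i,j)` is `a_{(j-i) mod N}`. -/
def circulantC (N : ℕ) (a : Fin N → ℤ) : Matrix (Fin N) (Fin N) ℤ :=
  Matrix.of fun i j : Fin N => a (j - i)

/-- The 2N×2N block matrix `M_a = [[I_N, C(a)], [0_N, q·I_N]]`. -/
def Mmat (N q : ℕ) (a : Fin N → ℤ) : Matrix (Fin N ⊕ Fin N) (Fin N ⊕ Fin N) ℤ :=
  Matrix.fromBlocks 1 (circulantC N a) 0 ((q : ℤ) • 1)

/-- The lattice `L_a ⊆ ℤ^{2N}` generated by the rows of `M_a`. -/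
def latticeL (N q : ℕ) (a : Fin N → ℤ) : Submodule ℤ (Fin N ⊕ Fin N → ℤ) :=
  Submodule.span ℤ (Set.range fun i => Mmat N q a i)

/-- The Euclidean norm of an integer vector. -/
noncomputable def eucNorm {ι : Type*} [Fintype ι] (x : ι → ℤ) : ℝ :=
  Real.sqrt (∑ i, ((x i : ℝ)) ^ 2)

noncomputable def toE {ι : Type*} [Fintype ι] (x : ι → ℤ) : EuclideanSpace ℝ ι :=
  WithLp.toLp 2 (fun i => (x i : ℝ))

lemma eucNorm_eq_norm {ι : Type*} [Fintype ι] (x : ι → ℤ) : eucNorm x = ‖toE x‖ := by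
  rw [EuclideanSpace.norm_eq]
  simp [eucNorm, toE, Real.norm_eq_abs, sq_abs]

lemma toE_sub {ι : Type*} [Fintype ι] (x y : ι → ℤ) : toE (x - y) = toE x - toE y := by
  ext i; simp [toE]

lemma eucNorm_sub_le {ι : Type*} [Fintype ι] (x y z : ι → ℤ) :
    eucNorm (x - z) ≤ eucNorm (x - y) + eucNorm (y - z) := by
  rw [eucNorm_eq_norm, eucNorm_eq_norm, eucNorm_eq_norm, toE_sub, toE_sub, toE_sub]
  exact norm_sub_le_norm_sub_add_norm_sub _ _ _

lemma eucNorm_sub_comm {ι : Type*} [Fintype ι] (x y : ι → ℤ) :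
    eucNorm (x - y) = eucNorm (y - x) := by
  rw [eucNorm_eq_norm, eucNorm_eq_norm, toE_sub, toE_sub, norm_sub_rev]

/-- Proposition 3.1: if `a ⋆ m ≡ b + c (mod q)` with `b` having coordinates in
`{0, …, q-1}`, every nonzero vector of `L_a` has norm `> q^{1/y}`, and
`E ∈ ℤ^{2N}` satisfies `‖(m, c) - E‖ < (1/2) q^{1/y}`, then `u = (m, b + c) ∈ L_a`,
and every closest vector of `L_a` to `b_target = E + (0, b)` equals `u`;
in particular its first `N` coordinates are exactly `m`. -/
theorem message_recovery (N : ℕ) (hN : 1 ≤ N) (q : ℕ) (hq : 2 ≤ q)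
    (y : ℝ) (hy : 1 ≤ y) (a m c b : Fin N → ℤ)
    (hb : ∀ i, 0 ≤ b i ∧ b i ≤ (q : ℤ) - 1)
    (hcong : ∀ k : Fin N,
      (q : ℤ) ∣ ((∑ i : Fin N, a i * m (k - i)) - (b k + c k)))
    (hfirst : ∀ v ∈ latticeL N q a, v ≠ 0 → (q : ℝ) ^ (1 / y) < eucNorm v)
    (E : Fin N ⊕ Fin N → ℤ)
    (hE : eucNorm (Sum.elim m c - E) < (1 / 2) * (q : ℝ) ^ (1 / y)) :
    Sum.elim m (fun i => b i + c i) ∈ latticeL N q a ∧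
    ∀ w ∈ latticeL N q a,
      (∀ v ∈ latticeL N q a,
        eucNorm (w - (E + Sum.elim (0 : Fin N → ℤ) b)) ≤ eucNorm (v - (E + Sum.elim (0 : Fin N → ℤ) b))) →
      w = Sum.elim m (fun i => b i + c i) ∧ ∀ i : Fin N, w (Sum.inl i) = m i := by
  haveI : NeZero N := ⟨by omega⟩
  set u : Fin N ⊕ Fin N → ℤ := Sum.elim m (fun i => b i + c i) with hu
  set bt : Fin N ⊕ Fin N → ℤ := E + Sum.elim (0 : Fin N → ℤ) b with hbt
  -- membership of u
  have humem : u ∈ latticeL N q a := by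
    have hc : ∀ k, ∃ dk, (∑ i : Fin N, a i * m (k - i)) - (b k + c k) = q * dk := hcong
    choose d hd using hc
    have key : u = ∑ k : Fin N ⊕ Fin N, (Sum.elim m (fun j => -d j)) k • Mmat N q a k := by
      funext j
      rw [Finset.sum_apply, Fintype.sum_sum_type]
      cases j with
      | inl j =>
        simp [hu, Mmat, Matrix.fromBlocks, Matrix.one_apply, Finset.sum_ite_eq, mul_comm]
      | inr j =>
        simp only [hu, Sum.elim_inl, Sum.elim_inr, Pi.smul_apply, smul_eq_mul, Mmat,
          Matrix.fromBlocks_apply₁₂, Matrix.fromBlocks_apply₂₂, circulantC, Matrix.of_apply,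
          Matrix.smul_apply, Matrix.one_apply, mul_ite, mul_one, mul_zero]
        rw [Finset.sum_ite_eq']
        have reindex : (∑ i : Fin N, a i * m (j - i)) = ∑ i : Fin N, m i * a (j - i) := by
          refine Fintype.sum_equiv (Equiv.subLeft j) _ _ fun i => ?_
          simp [Equiv.subLeft, sub_sub_cancel, mul_comm]
        have := hd j
        rw [reindex] at this
        simp only [Finset.mem_univ, if_true]
        linarith [this]
    rw [key]
    exact Submodule.sum_mem _ fun k _ =>
      Submodule.smul_mem _ _ (Submodule.subset_span ⟨k, rfl⟩)
  refine ⟨humem, fun w hw hclosest => ?_⟩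
  -- u - bt = (m,c) - E
  have hub : u - bt = Sum.elim m c - E := by
    funext j
    cases j with
    | inl j => simp [hu, hbt]
    | inr j => simp [hu, hbt]; ring
  have hub' : eucNorm (u - bt) < (1 / 2) * (q : ℝ) ^ (1 / y) := by rw [hub]; exact hE
  have hwb : eucNorm (w - bt) < (1 / 2) * (q : ℝ) ^ (1 / y) :=
    lt_of_le_of_lt (hclosest u humem) hub'
  have hwu : eucNorm (w - u) < (q : ℝ) ^ (1 / y) := by
    have := eucNorm_sub_le w bt u
    have h2 : eucNorm (bt - u) = eucNorm (u - bt) := eucNorm_sub_comm _ _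
    linarith
  have hmem : w - u ∈ latticeL N q a := Submodule.sub_mem _ hw humem
  have hwe : w = u := by
    by_contra hne
    have : w - u ≠ 0 := sub_ne_zero.mpr hne
    have := hfirst _ hmem this
    linarith
  exact ⟨hwe, fun i => by rw [hwe]; simp [hu]⟩
end

section
/- (Appendix Proposition) Let k ≥ 1 be an integer, N = 2k + 1, q a positive integer, and y ≥ 1 a real number. Define a ∈ ℤ^N by a_j = j − k for 0 ≤ j ≤ k−1, a_j = j + 1 − k for k ≤ j ≤ 2k−1, and a_{N−1} = ⌊N·q^{1/y}⌋ + 1. Assume (N² − 1)·N/12 + a_{N−1}² < (q − q^{1/y})² / (N · q^{2/y}). Then every vector v belonging to the lattice L_a generated by the rows of M_a = [[I_N, C(a)], [0_N, q·I_N]] but NOT belonging to the sublattice generated over ℤ by the rows of the N×2N matrix [I_N | C(a)] satisfies ‖v‖ > q^{1/y}. -/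
/-- The Euclidean norm of an integer vector. -/
noncomputable def enormZ {ι : Type*} [Fintype ι] (x : ι → ℤ) : ℝ :=
  Real.sqrt (∑ i, ((x i : ℝ)) ^ 2)

private lemma six_sum_sq (n : ℕ) :
    6 * ∑ i ∈ Finset.range n, ((i : ℤ) + 1) ^ 2 = (n : ℤ) * (n + 1) * (2 * n + 1) := by
  induction n with
  | zero => simp
  | succ n ih =>
    rw [Finset.sum_range_succ, mul_add, ih]
    push_cast
    ring

private lemma row_inl (N q : ℕ) (a : Fin N → ℤ) (c : Fin N ⊕ Fin N → ℤ) (j : Fin N) :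
    (∑ i, c i • Mmat N q a i) (Sum.inl j) = c (Sum.inl j) := by
  simp [Mmat, Finset.sum_apply, Fintype.sum_sum_type, Matrix.one_apply, mul_ite,
    Finset.sum_ite_eq']

private lemma row_inr (N q : ℕ) (a : Fin N → ℤ) (c : Fin N ⊕ Fin N → ℤ) (j : Fin N) :
    (∑ i, c i • Mmat N q a i) (Sum.inr j) =
      (∑ i, c (Sum.inl i) * a (j - i)) + q * c (Sum.inr j) := by
  have hd : ∀ i j2 : Fin N, ((q : Matrix (Fin N) (Fin N) ℤ)) i j2
      = if i = j2 then (q : ℤ) else 0 := by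
    intro i j2
    rw [← Matrix.diagonal_natCast]
    simp [Matrix.diagonal_apply]
  simp [Mmat, Finset.sum_apply, Fintype.sum_sum_type, circulantC, hd,
    mul_ite, Finset.sum_ite_eq', mul_comm]

/-- Appendix Proposition: with `N = 2k+1` and
`a = (-k, …, -1, 1, …, k, ⌊N q^{1/y}⌋ + 1)`, if
`(N² - 1)N/12 + a_{N-1}² < (q - q^{1/y})² / (N q^{2/y})`, then every vector of
`L_a` not belonging to the sublattice generated by the rows of `[I_N | C(a)]`
has Euclidean norm greater than `q^{1/y}`. -/
theorem appendix_prop (k : ℕ) (hk : 1 ≤ k) (q : ℕ) (hq : 0 < q)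
    (y : ℝ) (hy : 1 ≤ y) (a : Fin (2 * k + 1) → ℤ)
    (ha : ∀ j : Fin (2 * k + 1),
      a j = if (j : ℕ) < k then (j : ℤ) - (k : ℤ)
        else if (j : ℕ) < 2 * k then (j : ℤ) + 1 - (k : ℤ)
        else ⌊(2 * k + 1 : ℝ) * (q : ℝ) ^ (1 / y)⌋ + 1)
    (hineq : ((2 * k + 1 : ℝ) ^ 2 - 1) * (2 * k + 1) / 12
        + ((a (Fin.last (2 * k)) : ℝ)) ^ 2
      < ((q : ℝ) - (q : ℝ) ^ (1 / y)) ^ 2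
        / ((2 * k + 1 : ℝ) * (q : ℝ) ^ (2 / y))) :
    ∀ v ∈ latticeL (2 * k + 1) q a,
      v ∉ Submodule.span ℤ
          (Set.range fun i : Fin (2 * k + 1) => Mmat (2 * k + 1) q a (Sum.inl i)) →
      (q : ℝ) ^ (1 / y) < enormZ v := by
  intro v hv hvsub
  rw [latticeL, Submodule.mem_span_range_iff_exists_fun] at hv
  obtain ⟨c, hc⟩ := hv
  set x : Fin (2 * k + 1) → ℤ := fun i => c (Sum.inl i) with hxdef
  set z : Fin (2 * k + 1) → ℤ := fun i => c (Sum.inr i) with hzdef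
  have hvl : ∀ j, v (Sum.inl j) = x j := fun j => by
    rw [← hc]; exact row_inl _ _ _ _ _
  have hvr : ∀ j, v (Sum.inr j) = (∑ i, x i * a (j - i)) + q * z j := fun j => by
    rw [← hc]; exact row_inr _ _ _ _ _
  -- z is nonzero
  have hzne : ∃ j, z j ≠ 0 := by
    by_contra h0
    push_neg at h0
    apply hvsub
    rw [Submodule.mem_span_range_iff_exists_fun]
    refine ⟨x, ?_⟩
    have h0' : ∀ i : Fin (2 * k + 1), c (Sum.inr i) = 0 := h0
    rw [← hc, Fintype.sum_sum_type]
    simp [h0', hxdef]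
  obtain ⟨j, hj⟩ := hzne
  -- real preliminaries
  set t : ℝ := (q : ℝ) ^ (1 / y) with htdef
  have hy0 : (0 : ℝ) < y := lt_of_lt_of_le one_pos hy
  have hq0 : (0 : ℝ) < q := by exact_mod_cast hq
  have hq1 : (1 : ℝ) ≤ q := by exact_mod_cast hq
  have ht0 : 0 < t := Real.rpow_pos_of_pos hq0 _
  have htq : t ≤ q := by
    calc t ≤ (q : ℝ) ^ (1 : ℝ) :=
          Real.rpow_le_rpow_of_exponent_le hq1
            (by rw [div_le_one hy0]; linarith)
      _ = q := Real.rpow_one _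
  -- the last entry
  set L : ℤ := a (Fin.last (2 * k)) with hLdef
  have hlastEq : a (Fin.last (2 * k)) = ⌊(2 * k + 1 : ℝ) * (q : ℝ) ^ (1 / y)⌋ + 1 := by
    have hlast := ha (Fin.last (2 * k))
    have h1 : ¬ ((Fin.last (2 * k) : ℕ) < k) := by rw [Fin.val_last]; omega
    have h2 : ¬ ((Fin.last (2 * k) : ℕ) < 2 * k) := by rw [Fin.val_last]; omega
    rw [if_neg h1, if_neg h2] at hlast
    exact hlast
  have hL1 : 1 ≤ L := by
    rw [hLdef, hlastEq]
    have h3 : (0 : ℝ) ≤ (2 * (k : ℝ) + 1) * (q : ℝ) ^ (1 / y) :=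
      mul_nonneg (by positivity) ht0.le
    have : (0 : ℤ) ≤ ⌊(2 * (k : ℝ) + 1) * (q : ℝ) ^ (1 / y)⌋ := Int.floor_nonneg.mpr h3
    omega
  -- the sum of squares of a
  set A : ℤ := ∑ i, (a i) ^ 2 with hAdef
  have hA6 : 6 * A = 2 * ((k : ℤ) * (k + 1) * (2 * k + 1)) + 6 * L ^ 2 := by
    have hF : ∑ i : Fin (2 * k + 1), (a i) ^ 2
        = ∑ i ∈ Finset.range (2 * k + 1),
            (if i < k then (i : ℤ) - k else if i < 2 * k then (i : ℤ) + 1 - k else L) ^ 2 := by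
      rw [← Fin.sum_univ_eq_sum_range]
      refine Finset.sum_congr rfl fun i _ => ?_
      rw [ha i, ← hlastEq, ← hLdef]
    have hlastF : ¬ (2 * k < k) := by omega
    have hlastF2 : ¬ (2 * k < 2 * k) := lt_irrefl _
    rw [hAdef, hF, Finset.sum_range_succ, if_neg hlastF, if_neg hlastF2,
      show 2 * k = k + k from by ring, Finset.sum_range_add]
    have e1 : ∑ i ∈ Finset.range k,
        (if i < k then (i : ℤ) - k else if i < k + k then (i : ℤ) + 1 - k else L) ^ 2
        = ∑ i ∈ Finset.range k, ((i : ℤ) + 1) ^ 2 := by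
      rw [← Finset.sum_range_reflect
        (fun i => (if i < k then (i : ℤ) - k else if i < k + k then (i : ℤ) + 1 - k else L) ^ 2) k]
      refine Finset.sum_congr rfl fun i hi => ?_
      rw [Finset.mem_range] at hi
      have h1 : k - 1 - i < k := by omega
      rw [if_pos h1]
      have : ((k - 1 - i : ℕ) : ℤ) = (k : ℤ) - 1 - i := by omega
      rw [this]
      ring
    have e2 : ∑ i ∈ Finset.range k,
        (if k + i < k then ((k + i : ℕ) : ℤ) - k
          else if k + i < k + k then ((k + i : ℕ) : ℤ) + 1 - k else L) ^ 2
        = ∑ i ∈ Finset.range k, ((i : ℤ) + 1) ^ 2 := by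
      refine Finset.sum_congr rfl fun i hi => ?_
      rw [Finset.mem_range] at hi
      rw [if_neg (by omega), if_pos (by omega)]
      push_cast
      ring
    rw [e1, e2]
    have := six_sum_sq k
    linarith
  have hApos : (0 : ℤ) < A := by
    have h1 : (1 : ℤ) ≤ L ^ 2 := by nlinarith
    have h2 : (0 : ℤ) ≤ (k : ℤ) * ((k : ℤ) + 1) * (2 * (k : ℤ) + 1) := by positivity
    linarith
  -- transfer the hypothesis to a bound on A
  have ht2 : (q : ℝ) ^ (2 / y) = t ^ 2 := by
    rw [htdef, show (2 : ℝ) / y = (1 / y) * 2 by ring, Real.rpow_mul hq0.le]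
    norm_num
  have hcast : (A : ℝ) = ((2 * (k : ℝ) + 1) ^ 2 - 1) * (2 * (k : ℝ) + 1) / 12 + (L : ℝ) ^ 2 := by
    have h6 : (6 : ℝ) * A = 2 * ((k : ℝ) * ((k : ℝ) + 1) * (2 * (k : ℝ) + 1)) + 6 * (L : ℝ) ^ 2 := by
      exact_mod_cast hA6
    linear_combination h6 / 6
  have hAR : (A : ℝ) < ((q : ℝ) - t) ^ 2 / ((2 * (k : ℝ) + 1) * t ^ 2) := by
    rw [hcast]
    rw [ht2] at hineq
    convert hineq using 2
  -- q - t > 0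
  have hNpos : (0 : ℝ) < 2 * (k : ℝ) + 1 := by positivity
  have htq' : t < q := by
    rcases lt_or_eq_of_le htq with h | h
    · exact h
    · exfalso
      rw [← h] at hAR
      simp at hAR
      have : (0 : ℝ) < A := by exact_mod_cast hApos
      linarith
  -- sqrt bound
  have hsqA : Real.sqrt (A : ℝ) < ((q : ℝ) - t) / (Real.sqrt (2 * (k : ℝ) + 1) * t) := by
    have h1 : Real.sqrt (A : ℝ)
        < Real.sqrt (((q : ℝ) - t) ^ 2 / ((2 * (k : ℝ) + 1) * t ^ 2)) :=
      Real.sqrt_lt_sqrt (by exact_mod_cast hApos.le) hAR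
    rwa [Real.sqrt_div (by positivity) _, Real.sqrt_sq (by linarith),
      Real.sqrt_mul (by positivity) _, Real.sqrt_sq ht0.le] at h1
  -- norm setup
  set w : Fin (2 * k + 1) → ℤ := fun i => v (Sum.inr i) with hwdef
  have henorm : enormZ v
      = Real.sqrt ((∑ i, ((x i : ℝ)) ^ 2) + ∑ i, ((w i : ℝ)) ^ 2) := by
    rw [enormZ, Fintype.sum_sum_type]
    congr 1
    congr 1
    exact Finset.sum_congr rfl fun i _ => by rw [hvl i]
  have hwn : (0 : ℝ) ≤ ∑ i, ((w i : ℝ)) ^ 2 := by positivity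
  have hxn : (0 : ℝ) ≤ ∑ i, ((x i : ℝ)) ^ 2 := by positivity
  by_cases hX : (∑ i, ((x i : ℝ)) ^ 2) ≤ t ^ 2
  · -- small x: the second block coordinate j is large
    set S : ℝ := ∑ i, (x i : ℝ) * (a (j - i) : ℝ) with hSdef
    have hperm : ∑ i, ((a (j - i) : ℝ)) ^ 2 = (A : ℝ) := by
      push_cast [hAdef]
      exact Fintype.sum_equiv (Equiv.subLeft j) _ _ fun i => by simp
    have hCS : |S| ≤ Real.sqrt (∑ i, ((x i : ℝ)) ^ 2) * Real.sqrt (A : ℝ) := by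
      rw [← hperm]
      have h1 := Real.sum_mul_le_sqrt_mul_sqrt Finset.univ
        (fun i => (x i : ℝ)) (fun i => (a (j - i) : ℝ))
      have h2 := Real.sum_mul_le_sqrt_mul_sqrt Finset.univ
        (fun i => -(x i : ℝ)) (fun i => (a (j - i) : ℝ))
      simp only [neg_mul, Finset.sum_neg_distrib, neg_sq] at h2
      rw [abs_le]
      constructor
      · linarith
      · exact h1
    have hsqx : Real.sqrt (∑ i, ((x i : ℝ)) ^ 2) ≤ t := by
      calc Real.sqrt (∑ i, ((x i : ℝ)) ^ 2) ≤ Real.sqrt (t ^ 2) := Real.sqrt_le_sqrt hX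
        _ = t := Real.sqrt_sq ht0.le
    have hsqrtN : (1 : ℝ) ≤ Real.sqrt (2 * (k : ℝ) + 1) := by
      rw [show (1 : ℝ) = Real.sqrt 1 from (Real.sqrt_one).symm]
      exact Real.sqrt_le_sqrt (by norm_num)
    have hS : |S| < (q : ℝ) - t := by
      have h1 : |S| ≤ t * Real.sqrt (A : ℝ) := by
        calc |S| ≤ Real.sqrt (∑ i, ((x i : ℝ)) ^ 2) * Real.sqrt (A : ℝ) := hCS
          _ ≤ t * Real.sqrt (A : ℝ) :=
            mul_le_mul_of_nonneg_right hsqx (Real.sqrt_nonneg _)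
      have h2 : t * Real.sqrt (A : ℝ)
          < t * (((q : ℝ) - t) / (Real.sqrt (2 * (k : ℝ) + 1) * t)) :=
        mul_lt_mul_of_pos_left hsqA ht0
      have h3 : t * (((q : ℝ) - t) / (Real.sqrt (2 * (k : ℝ) + 1) * t))
          = ((q : ℝ) - t) / Real.sqrt (2 * (k : ℝ) + 1) := by
        field_simp
      have h4 : ((q : ℝ) - t) / Real.sqrt (2 * (k : ℝ) + 1) ≤ (q : ℝ) - t :=
        div_le_self (by linarith) hsqrtN
      linarith
    -- the coordinate w j
    have hwj : (w j : ℝ) = S + (q : ℝ) * (z j : ℝ) := by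
      have : w j = (∑ i, x i * a (j - i)) + q * z j := hvr j
      rw [this, hSdef]
      push_cast
      ring
    have hzj : (1 : ℝ) ≤ |(z j : ℝ)| := by
      have : 1 ≤ |z j| := Int.one_le_abs hj
      calc (1 : ℝ) ≤ (|z j| : ℤ) := by exact_mod_cast this
        _ = |(z j : ℝ)| := by push_cast; ring
    have hqz : (q : ℝ) ≤ |(q : ℝ) * (z j : ℝ)| := by
      rw [abs_mul, abs_of_nonneg hq0.le]
      calc (q : ℝ) = (q : ℝ) * 1 := (mul_one _).symm
        _ ≤ (q : ℝ) * |(z j : ℝ)| := mul_le_mul_of_nonneg_left hzj hq0.le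
    have habs : |(q : ℝ) * (z j : ℝ)| ≤ |(w j : ℝ)| + |S| := by
      calc |(q : ℝ) * (z j : ℝ)| = |(w j : ℝ) - S| := by rw [hwj]; congr 1; ring
        _ ≤ |(w j : ℝ)| + |S| := abs_sub _ _
    have hwj2 : t < |(w j : ℝ)| := by linarith
    have hwjsq : t ^ 2 < ((w j : ℝ)) ^ 2 := by
      calc t ^ 2 < |(w j : ℝ)| ^ 2 := by
            apply pow_lt_pow_left₀ hwj2 ht0.le
            norm_num
        _ = ((w j : ℝ)) ^ 2 := sq_abs _
    have hsum : t ^ 2 < (∑ i, ((x i : ℝ)) ^ 2) + ∑ i, ((w i : ℝ)) ^ 2 := by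
      have : ((w j : ℝ)) ^ 2 ≤ ∑ i, ((w i : ℝ)) ^ 2 :=
        Finset.single_le_sum (f := fun i => ((w i : ℝ)) ^ 2)
          (fun i _ => by positivity) (Finset.mem_univ j)
      linarith
    rw [henorm]
    rw [show t = (q : ℝ) ^ (1 / y) from rfl] at hsum ⊢
    exact (Real.lt_sqrt ht0.le).mpr hsum
  · -- big x
    push_neg at hX
    have hsum : t ^ 2 < (∑ i, ((x i : ℝ)) ^ 2) + ∑ i, ((w i : ℝ)) ^ 2 := by linarith
    rw [henorm]
    exact (Real.lt_sqrt ht0.le).mpr hsum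
end
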